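/- For every a ∈ A, a is a minimal A-degree of I_A if and only if the graph G_a is not connected. -/

import Mathlib

open MvPolynomial

/-- The monomial `X^u = ∏ i, X i ^ u i` in `k[X_1, …, X_r]`. -/
noncomputable def mon (k : Type*) [Field k] {r : ℕ} (u : Fin r → ℕ) :
    MvPolynomial (Fin r) k :=
  ∏ i, X i ^ u i

/-- `S` is a binomial generating set of `IA`: a set of pure-difference binomials
`X^u - X^v` with `π u = π v` generating `IA` as an ideal. -/
def IsBinomGenSet (k : Type*) [Field k] {r : ℕ} {A : Type*} [AddCancelCommMonoid A]
    (π : (Fin r → ℕ) → A) (IA : Ideal (MvPolynomial (Fin r) k))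
    (S : Set (MvPolynomial (Fin r) k)) : Prop :=
  (∀ f ∈ S, ∃ u v : Fin r → ℕ, π u = π v ∧ f = mon k u - mon k v) ∧ Ideal.span S = IA

/-- A minimal binomial generating set: no proper subset generates `IA`. -/
def IsMinBinomGenSet (k : Type*) [Field k] {r : ℕ} {A : Type*} [AddCancelCommMonoid A]
    (π : (Fin r → ℕ) → A) (IA : Ideal (MvPolynomial (Fin r) k))
    (S : Set (MvPolynomial (Fin r) k)) : Prop :=
  IsBinomGenSet k π IA S ∧ ∀ T, T ⊂ S → Ideal.span T ≠ IA

/-- `f` is an indispensable binomial of `IA`: a binomial `X^u - X^v ∈ IA` with `u ≠ v`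
such that every binomial generating set of `IA` contains `f` or `-f`. -/
def IsIndispBinomial (k : Type*) [Field k] {r : ℕ} {A : Type*} [AddCancelCommMonoid A]
    (π : (Fin r → ℕ) → A) (IA : Ideal (MvPolynomial (Fin r) k))
    (f : MvPolynomial (Fin r) k) : Prop :=
  (∃ u v : Fin r → ℕ, u ≠ v ∧ π u = π v ∧ f = mon k u - mon k v) ∧ f ∈ IA ∧
    ∀ S, IsBinomGenSet k π IA S → f ∈ S ∨ -f ∈ S

/-- `X^u` is an indispensable monomial of `IA`: every binomial generating set of `IA`
contains a binomial `X^u - X^v` or `X^v - X^u` for some `v`. -/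
def IsIndispMonomial (k : Type*) [Field k] {r : ℕ} {A : Type*} [AddCancelCommMonoid A]
    (π : (Fin r → ℕ) → A) (IA : Ideal (MvPolynomial (Fin r) k))
    (u : Fin r → ℕ) : Prop :=
  ∀ S, IsBinomGenSet k π IA S →
    ∃ f ∈ S, ∃ v : Fin r → ℕ, f = mon k u - mon k v ∨ f = mon k v - mon k u

/-- `S` is an `A`-homogeneous generating set of `IA`: a set of `A`-homogeneous
polynomials generating `IA` as an ideal. -/
def IsHomogGenSet (k : Type*) [Field k] {r : ℕ} {A : Type*} [AddCancelCommMonoid A]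
    (π : (Fin r → ℕ) → A) (IA : Ideal (MvPolynomial (Fin r) k))
    (S : Set (MvPolynomial (Fin r) k)) : Prop :=
  (∀ f ∈ S, ∃ b : A, ∀ d ∈ f.support, π ⇑d = b) ∧ Ideal.span S = IA

/-- A minimal `A`-homogeneous generating set: no proper subset generates `IA`. -/
def IsMinHomogGenSet (k : Type*) [Field k] {r : ℕ} {A : Type*} [AddCancelCommMonoid A]
    (π : (Fin r → ℕ) → A) (IA : Ideal (MvPolynomial (Fin r) k))
    (S : Set (MvPolynomial (Fin r) k)) : Prop :=
  IsHomogGenSet k π IA S ∧ ∀ T, T ⊂ S → Ideal.span T ≠ IA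

/-- `b` is an indispensable `A`-degree of `IA`: every binomial generating set of `IA`
contains a binomial both of whose monomials have `A`-degree `b`, and every minimal
binomial generating set contains exactly one such binomial. -/
def IsIndispDegree (k : Type*) [Field k] {r : ℕ} {A : Type*} [AddCancelCommMonoid A]
    (π : (Fin r → ℕ) → A) (IA : Ideal (MvPolynomial (Fin r) k)) (b : A) : Prop :=
  (∀ S, IsBinomGenSet k π IA S →
    ∃ f ∈ S, ∃ u v : Fin r → ℕ, π u = b ∧ π v = b ∧ f = mon k u - mon k v) ∧
  ∀ S, IsMinBinomGenSet k π IA S →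
    ∃! f, f ∈ S ∧ ∃ u v : Fin r → ℕ, π u = b ∧ π v = b ∧ f = mon k u - mon k v

/-!
Every element of `𝔪 · I_A` is a `k`-combination of the `X^D (X^U - X^V)` with `D ≠ 0` and
`π U = π V`. When `D + U` and `D + V` lie in the fiber of `b` they share the factor `X^D`, so they
are equal or adjacent in `G_b`. Hence the functional summing the coefficients over one connected
component of `G_b` vanishes on `𝔪 · I_A`, while it takes the value `1` on `X^p - X^q` for `p, q` in
different components; this makes `X^p - X^q` a minimal generator when `G_b` is disconnected.

Conversely, a degree-`b` element `f` of `I_A` satisfies `f(1, …, 1) = 0`, so it is a combination of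
the `X^d - X^e` with `d, e` in the fiber of `b`. If `G_b` is connected, then walking along a path
reduces these to edges `u ∼ v`, and with `m = u ⊓ v ≠ 0` we get
`X^u - X^v = X^m (X^(u - m) - X^(v - m)) ∈ 𝔪 · I_A`.
-/

namespace MvPolynomial

variable {σ R : Type*}

lemma mem_of_eval_one_eq_zero [CommRing R] {J : Ideal (MvPolynomial σ R)}
    {f : MvPolynomial σ R} (hf : eval 1 f = 0)
    (hJ : ∀ d ∈ f.support, ∀ e ∈ f.support, monomial d (1 : R) - monomial e 1 ∈ J) :
    f ∈ J := by
  obtain rfl | ⟨e, he⟩ := f.support.eq_empty_or_nonempty.imp_left support_eq_empty.mp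
  · exact J.zero_mem
  have hsum : ∑ d ∈ f.support, coeff d f = 0 := by
    simpa [eval_eq] using hf
  have hf' : f = ∑ d ∈ f.support, C (coeff d f) * (monomial d 1 - monomial e 1) := by
    simp_rw [mul_sub, Finset.sum_sub_distrib, ← Finset.sum_mul, ← map_sum, hsum, map_zero,
      zero_mul, sub_zero, C_mul_monomial, mul_one, support_sum_monomial_coeff]
  rw [hf']
  exact J.sum_mem fun d hd => J.mul_mem_left _ (hJ d hd e he)

noncomputable def coeffFunctional [CommSemiring R] (w : (σ →₀ ℕ) → R) : MvPolynomial σ R →ₗ[R] R :=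
  (Finsupp.linearCombination R w).comp (AddMonoidAlgebra.coeffLinearEquiv R).toLinearMap

lemma coeffFunctional_monomial [CommSemiring R] (w : (σ →₀ ℕ) → R) (d : σ →₀ ℕ) (c : R) :
    coeffFunctional w (monomial d c) = c * w d := by
  rw [coeffFunctional, LinearMap.comp_apply, LinearEquiv.coe_coe, ← single_eq_monomial]
  exact (Finsupp.linearCombination_single R c d).trans (smul_eq_mul _ _)

end MvPolynomial

section Binomial

variable (k : Type*) [Field k] {r : ℕ} {A : Type*}

noncomputable def binomialIdeal (π : (Fin r → ℕ) → A) : Ideal (MvPolynomial (Fin r) k) :=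
  Ideal.span {f | ∃ u v : Fin r → ℕ, π u = π v ∧ f = mon k u - mon k v}

variable {k}

lemma mon_eq_monomial (d : Fin r →₀ ℕ) : mon k ⇑d = monomial d 1 := by
  rw [mon, monomial_eq, map_one, one_mul, Finsupp.prod_pow]

lemma mon_add (u v : Fin r → ℕ) : mon k (u + v) = mon k u * mon k v := by
  simp only [mon, Pi.add_apply, pow_add, Finset.prod_mul_distrib]

lemma mon_mem_idealOfVars {u : Fin r → ℕ} (hu : u ≠ 0) :
    mon k u ∈ idealOfVars (Fin r) k := by
  have h := monomial_mem_pow_idealOfVars_iff (R := k) 1 (Finsupp.equivFunOnFinite.symm u)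
    one_ne_zero
  rw [pow_one] at h
  rw [← Finsupp.coe_equivFunOnFinite_symm u, mon_eq_monomial, h, Nat.one_le_iff_ne_zero, Ne,
    Finsupp.degree_eq_zero_iff]
  exact fun h0 => hu (funext fun i => by simpa using DFunLike.congr_fun h0 i)

lemma eval_one_mon (u : Fin r → ℕ) : eval 1 (mon k u) = 1 := by
  simp [mon]

lemma binomialIdeal_le_ker_eval_one (π : (Fin r → ℕ) → A) :
    binomialIdeal k π ≤ RingHom.ker (eval 1) := by
  rw [binomialIdeal, Ideal.span_le]
  rintro _ ⟨u, v, -, rfl⟩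
  simp [eval_one_mon]

variable {π : (Fin r → ℕ) → A}

lemma mem_support_mon_sub_mon {u v : Fin r → ℕ} {d : Fin r →₀ ℕ}
    (hd : d ∈ (mon k u - mon k v).support) : ⇑d = u ∨ ⇑d = v := by
  rw [← Finsupp.coe_equivFunOnFinite_symm u, ← Finsupp.coe_equivFunOnFinite_symm v, mon_eq_monomial,
    mon_eq_monomial] at hd
  rcases Finset.mem_union.mp (support_sub _ _ _ hd) with h | h <;>
    rw [Finset.mem_singleton.mp (support_monomial_subset h)] <;> simp

lemma coeffFunctional_eq_zero_of_mem_idealOfVars_mul {w : (Fin r →₀ ℕ) → k}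
    (hw : ∀ D U V : Fin r →₀ ℕ, D ≠ 0 → π ⇑U = π ⇑V → w (D + U) = w (D + V))
    {g : MvPolynomial (Fin r) k} (hg : g ∈ idealOfVars (Fin r) k * binomialIdeal k π) :
    coeffFunctional w g = 0 := by
  rw [idealOfVars, binomialIdeal, Ideal.span_mul_span'] at hg
  suffices ∀ c, coeffFunctional w (c * g) = 0 by simpa using this 1
  induction hg using Submodule.span_induction with
  | mem x hx =>
    obtain ⟨_, ⟨i, rfl⟩, _, ⟨u, v, huv, rfl⟩, rfl⟩ := hx
    intro c
    dsimp only
    induction c using MvPolynomial.induction_on' with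
    | monomial d e =>
      rw [← Finsupp.coe_equivFunOnFinite_symm u, ← Finsupp.coe_equivFunOnFinite_symm v,
        mon_eq_monomial, mon_eq_monomial, X]
      simp only [mul_sub, ← mul_assoc, monomial_mul, map_sub, coeffFunctional_monomial]
      rw [← add_assoc, ← add_assoc, hw (d + Finsupp.single i 1) (Finsupp.equivFunOnFinite.symm u)
        (Finsupp.equivFunOnFinite.symm v) (by simp) (by simpa using huv), sub_self]
    | add p q hp hq => rw [add_mul, map_add, hp, hq, add_zero]
  | zero => simp
  | add x y _ _ hx hy => intro c; rw [mul_add, map_add, hx, hy, add_zero]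
  | smul c' x _ hx => intro c; rw [smul_eq_mul, ← mul_assoc]; exact hx _

lemma mon_sub_mon_mem_idealOfVars_mul [Add A] [IsRightCancelAdd A]
    (hπ : ∀ u v, π (u + v) = π u + π v)
    {u v : Fin r → ℕ} (huv : π u = π v) (hmin : u ⊓ v ≠ 0) :
    mon k u - mon k v ∈ idealOfVars (Fin r) k * binomialIdeal k π := by
  obtain ⟨m, hm⟩ : ∃ m, m = u ⊓ v := ⟨_, rfl⟩
  have hu : u = (u - m) + m := (tsub_add_cancel_of_le (hm ▸ inf_le_left)).symm
  have hv : v = (v - m) + m := (tsub_add_cancel_of_le (hm ▸ inf_le_right)).symm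
  have hπ' : π (u - m) = π (v - m) := by
    refine add_right_cancel (b := π m) ?_
    rw [← hπ, ← hπ, ← hu, ← hv, huv]
  have hfac : mon k u - mon k v = mon k m * (mon k (u - m) - mon k (v - m)) := by
    rw [hu, hv, mon_add, mon_add, add_tsub_cancel_right, add_tsub_cancel_right]
    ring
  rw [hfac]
  exact Ideal.mul_mem_mul (mon_mem_idealOfVars (hm ▸ hmin))
    (Ideal.subset_span ⟨_, _, hπ', rfl⟩)

section FiberGraph

variable {b : A} {G : SimpleGraph {w : Fin r → ℕ // π w = b}}

lemma reachable_of_inf_ne_zero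
    (hG : ∀ u v, G.Adj u v ↔ u ≠ v ∧ (fun i => min (u.1 i) (v.1 i)) ≠ 0)
    {x y : {w : Fin r → ℕ // π w = b}} (h : x.1 ⊓ y.1 ≠ 0) : G.Reachable x y := by
  by_cases hxy : x = y
  · exact hxy ▸ SimpleGraph.Reachable.refl x
  · exact ((hG x y).mpr ⟨hxy, h⟩).reachable

lemma mon_sub_mon_mem_idealOfVars_mul_of_reachable [Add A] [IsRightCancelAdd A]
    (hπ : ∀ u v, π (u + v) = π u + π v)
    (hG : ∀ u v, G.Adj u v ↔ u ≠ v ∧ (fun i => min (u.1 i) (v.1 i)) ≠ 0)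
    {p q : {w : Fin r → ℕ // π w = b}} (h : G.Reachable p q) :
    mon k p.1 - mon k q.1 ∈ idealOfVars (Fin r) k * binomialIdeal k π := by
  obtain ⟨w⟩ := h
  induction w with
  | nil => simp
  | @cons p m q hadj _ ih =>
    have hstep : mon k p.1 - mon k m.1 ∈ idealOfVars (Fin r) k * binomialIdeal k π :=
      mon_sub_mon_mem_idealOfVars_mul hπ (p.2.trans m.2.symm) ((hG p m).mp hadj).2
    simpa using add_mem hstep ih

lemma mem_idealOfVars_mul_of_preconnected [Add A] [IsRightCancelAdd A]
    (hπ : ∀ u v, π (u + v) = π u + π v)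
    (hG : ∀ u v, G.Adj u v ↔ u ≠ v ∧ (fun i => min (u.1 i) (v.1 i)) ≠ 0)
    (hconn : G.Preconnected) {f : MvPolynomial (Fin r) k} (hf : f ∈ binomialIdeal k π)
    (hhom : ∀ d ∈ f.support, π ⇑d = b) :
    f ∈ idealOfVars (Fin r) k * binomialIdeal k π := by
  refine mem_of_eval_one_eq_zero (binomialIdeal_le_ker_eval_one π hf) fun d hd e he => ?_
  rw [← mon_eq_monomial, ← mon_eq_monomial]
  exact mon_sub_mon_mem_idealOfVars_mul_of_reachable (p := ⟨d, hhom d hd⟩) (q := ⟨e, hhom e he⟩)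
    hπ hG (hconn _ _)

lemma mon_sub_mon_not_mem_idealOfVars_mul_of_not_reachable [Add A]
    (hπ : ∀ u v, π (u + v) = π u + π v)
    (hG : ∀ u v, G.Adj u v ↔ u ≠ v ∧ (fun i => min (u.1 i) (v.1 i)) ≠ 0)
    {p q : {w : Fin r → ℕ // π w = b}} (hpq : ¬ G.Reachable p q) :
    mon k p.1 - mon k q.1 ∉ idealOfVars (Fin r) k * binomialIdeal k π := by
  classical
  set C : Set (Fin r →₀ ℕ) := {d | ∃ h : π d = b, G.Reachable p ⟨d, h⟩}
  have hC : ∀ D U V : Fin r →₀ ℕ, D ≠ 0 → π ⇑U = π ⇑V → (D + U ∈ C ↔ D + V ∈ C) := by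
    intro D U V hD hUV
    have hππ : π ⇑(D + U) = π ⇑(D + V) := by simp only [Finsupp.coe_add, hπ, hUV]
    have hle : (D : Fin r → ℕ) ≤ (D + U : Fin r → ℕ) ⊓ (D + V : Fin r → ℕ) :=
      le_inf (by simp) (by simp)
    have hinf : (D + U : Fin r → ℕ) ⊓ (D + V : Fin r → ℕ) ≠ 0 := fun h0 =>
      hD (DFunLike.coe_injective (le_zero_iff.mp (h0 ▸ hle)))
    constructor
    · rintro ⟨h, hr⟩
      exact ⟨hππ ▸ h, hr.trans (reachable_of_inf_ne_zero hG hinf)⟩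
    · rintro ⟨h, hr⟩
      exact ⟨hππ.trans h, hr.trans (reachable_of_inf_ne_zero hG hinf).symm⟩
  intro hmem
  have h0 := coeffFunctional_eq_zero_of_mem_idealOfVars_mul (w := C.indicator 1)
    (fun D U V hD hUV => by simp only [Set.indicator_apply, Pi.one_apply, hC D U V hD hUV]) hmem
  have hp : Finsupp.equivFunOnFinite.symm p.1 ∈ C := ⟨p.2, by simp⟩
  have hq : Finsupp.equivFunOnFinite.symm q.1 ∉ C := fun ⟨_, h⟩ => hpq (by simpa using h)
  rw [← Finsupp.coe_equivFunOnFinite_symm p.1, ← Finsupp.coe_equivFunOnFinite_symm q.1,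
    mon_eq_monomial, mon_eq_monomial, map_sub, coeffFunctional_monomial, coeffFunctional_monomial,
    Set.indicator_of_mem hp, Set.indicator_of_notMem hq] at h0
  simp at h0

end FiberGraph

end Binomial

theorem statement_3_general {k : Type*} [Field k] {r : ℕ}
    {A : Type*} [AddCancelCommMonoid A]
    (a : Fin r → A)
    (π : (Fin r → ℕ) → A) (hπ : ∀ u, π u = ∑ i, u i • a i)
    (hgen : ∀ x : A, ∃ u, π u = x)
    (IA : Ideal (MvPolynomial (Fin r) k))
    (hIA : IA = Ideal.span {f | ∃ u v : Fin r → ℕ, π u = π v ∧ f = mon k u - mon k v})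
    (b : A)
    (G : SimpleGraph {w : Fin r → ℕ // π w = b})
    (hG : ∀ u v, G.Adj u v ↔ u ≠ v ∧ (fun i => min (u.1 i) (v.1 i)) ≠ 0) :
    (∃ f ∈ IA, (∀ d ∈ f.support, π ⇑d = b) ∧
        f ∉ Ideal.span (Set.range (X : Fin r → MvPolynomial (Fin r) k)) * IA) ↔
      ¬ G.Connected := by
  have hadd : ∀ u v, π (u + v) = π u + π v := fun u v => by
    simp only [hπ, Pi.add_apply, add_smul, Finset.sum_add_distrib]
  subst hIA
  constructor
  · rintro ⟨f, hf, hhom, hfm⟩ hconn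
    exact hfm (mem_idealOfVars_mul_of_preconnected hadd hG hconn.preconnected hf hhom)
  · intro hnc
    obtain ⟨u, hu⟩ := hgen b
    obtain ⟨p, q, hpq⟩ : ∃ p q, ¬ G.Reachable p q := by
      by_contra! h
      exact hnc (G.connected_iff.mpr ⟨h, ⟨⟨u, hu⟩⟩⟩)
    refine ⟨mon k p.1 - mon k q.1, Ideal.subset_span ⟨_, _, p.2.trans q.2.symm, rfl⟩,
      fun d hd => ?_, mon_sub_mon_not_mem_idealOfVars_mul_of_not_reachable hadd hG hpq⟩
    rcases mem_support_mon_sub_mon hd with h | h <;> rw [h]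
    exacts [p.2, q.2]

/-- `b ∈ A` is a minimal `A`-degree of `I_A` (the `A`-degree-`b` component of `I_A` is
not contained in that of `𝔪·I_A`) if and only if the graph `G_b`, on the fiber
`π⁻¹(b)` with `u ∼ v` iff `u ≠ v` and `min(u,v) ≠ 0`, is not connected. -/
theorem statement_3 {k : Type*} [Field k] {r : ℕ} (hr : 1 ≤ r)
    {A : Type*} [AddCancelCommMonoid A]
    (hred : ∀ x y : A, x + y = 0 → x = 0 ∧ y = 0)
    (a : Fin r → A) (ha : ∀ i, a i ≠ 0)
    (π : (Fin r → ℕ) → A) (hπ : ∀ u, π u = ∑ i, u i • a i)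
    (hgen : ∀ x : A, ∃ u, π u = x)
    (hfib : ∀ x : A, {u : Fin r → ℕ | π u = x}.Finite)
    (IA : Ideal (MvPolynomial (Fin r) k))
    (hIA : IA = Ideal.span {f | ∃ u v : Fin r → ℕ, π u = π v ∧ f = mon k u - mon k v})
    (b : A)
    (G : SimpleGraph {w : Fin r → ℕ // π w = b})
    (hG : ∀ u v, G.Adj u v ↔ u ≠ v ∧ (fun i => min (u.1 i) (v.1 i)) ≠ 0) :
    (∃ f ∈ IA, (∀ d ∈ f.support, π ⇑d = b) ∧
        f ∉ Ideal.span (Set.range (X : Fin r → MvPolynomial (Fin r) k)) * IA) ↔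
      ¬ G.Connected :=
  statement_3_general a π hπ hgen IA hIA b G hG
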